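/- arXiv:1411.3618 — 2 statements merged into one kernel-verified Lean document; each statement's English description precedes it below -/
import Mathlib

section
/- Suppose φ satisfies the Kolmogorov forward equation (KFE) on Ω for all t > 0, the diagonal boundary condition (DBC), and φ(S₀,S₀,t) = 0 for all t > 0. Then for all B > S₀ and T > 0, the zero-strike forward (foreign no-touch) equation holds: ∂C̃/∂T (0,B,T) = − ½ σ²(B,B,T) B³ D(T) Q(T) φ(B,B,T), equivalently ∂C̃/∂T(0,B,T) = − ½ σ²(B,B,T) B³ (∂³C̃/∂K²∂B)(K,B,T)|_{K=B}. -/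
/-!
For strike `0` the price is `C̃(0,B,T) = Q D ∫_{S₀}^B ∫_0^y x φ dx dy`, and `Q D` contributes
`-μ C̃` to its `T`-derivative. Substituting the forward equation for `∂ₜφ` and integrating by
parts in `x`, the remaining `y`-integrand `∫_0^y x ∂ₜφ dx - μ ∫_0^y x φ dx` becomes, with the help
of the diagonal boundary condition, the exact derivative `-½ d/dy (y σ²y²φ(y,y))`. The integral
over `[S₀, B]` therefore telescopes, and the corner condition removes the term at `S₀`.

As `σ` is only separately differentiable in `x` and `y`, `σ²x²φ` is never differentiated along
the diagonal directly: the forward equation gives it as `∫_0^x (x - s) ∂ₓ²(σ²x²φ)(s, y) ds`,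
whose integrand is expressed through `φ` alone and is differentiable in `y`.

The second form of the equation follows from `∂²C̃/∂K² (K,B,T) = Q D ∫_K^B φ(K,y,T) dy` for
`K > S₀`.
-/

open MeasureTheory Real Filter

/-- Discount factor `D(T) = exp(-∫₀ᵀ r(u) du)`. -/
noncomputable def disc (r : ℝ → ℝ) (T : ℝ) : ℝ := Real.exp (-(∫ u in (0:ℝ)..T, r u))

/-- Dividend capitalisation `Q(T) = exp(∫₀ᵀ q(u) du)`. -/
noncomputable def capQ (q : ℝ → ℝ) (T : ℝ) : ℝ := Real.exp (∫ u in (0:ℝ)..T, q u)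

/-- Up-and-out call price
`C(K,B,T) = D(T) ∫_{max(K,S₀)}^B ∫_K^y (x-K) φ(x,y,T) dx dy`. -/
noncomputable def upOutCall (S₀ : ℝ) (r : ℝ → ℝ) (φ : ℝ → ℝ → ℝ → ℝ) (K B T : ℝ) : ℝ :=
  disc r T * ∫ y in (max K S₀)..B, ∫ x in K..y, (x - K) * φ x y T

/-- Capitalised up-and-out call price `C̃(K,B,T) = Q(T) C(K,B,T)`. -/
noncomputable def upOutCallTilde (S₀ : ℝ) (r q : ℝ → ℝ) (φ : ℝ → ℝ → ℝ → ℝ)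
    (K B T : ℝ) : ℝ :=
  capQ q T * upOutCall S₀ r φ K B T

open Set Topology intervalIntegral

namespace intervalIntegral

variable {W dW : ℝ → ℝ → ℝ}

theorem hasDerivAt_integral_of_continuous_partial
    (hW : Continuous (Function.uncurry W)) (hdW : Continuous (Function.uncurry dW))
    (hd : ∀ s b, HasDerivAt (W s) (dW s b) b) (a c y : ℝ) :
    HasDerivAt (fun b => ∫ s in a..c, W s b) (∫ s in a..c, dW s y) y := by
  obtain ⟨M, hM⟩ := (isCompact_uIcc.prod (isCompact_closedBall y 1)).exists_bound_of_continuousOn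
    hdW.continuousOn
  refine (hasDerivAt_integral_of_dominated_loc_of_deriv_le (F := fun b s => W s b)
    (F' := fun b s => dW s b) (bound := fun _ => M)
    (Metric.ball_mem_nhds y one_pos) (.of_forall fun b => ?_) ?_ ?_ ?_
    (intervalIntegrable_const (μ := volume)) ?_).2
  · exact (hW.comp₂ continuous_id continuous_const).aestronglyMeasurable
  · exact (hW.comp₂ continuous_id continuous_const).intervalIntegrable a c
  · exact (hdW.comp₂ continuous_id continuous_const).aestronglyMeasurable
  · exact .of_forall fun s hs b hb =>
      hM (s, b) ⟨uIoc_subset_uIcc hs, Metric.ball_subset_closedBall hb⟩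
  · exact .of_forall fun s _ b _ => hd s b

theorem hasDerivAt_integral_upper_of_continuous_partial
    (hW : Continuous (Function.uncurry W)) (hdW : Continuous (Function.uncurry dW))
    (hd : ∀ s b, HasDerivAt (W s) (dW s b) b) (a y : ℝ) :
    HasDerivAt (fun b => ∫ s in a..b, W s b) ((∫ s in a..y, dW s y) + W y y) y := by
  have hWs : ∀ b, Continuous fun s => W s b := fun b => hW.comp₂ continuous_id continuous_const
  have hsplit : (fun b => ∫ s in a..b, W s b) =
      fun b => (∫ s in a..y, W s b) + ∫ s in y..b, W s b := by
    ext b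
    exact (integral_add_adjacent_intervals
      ((hWs b).intervalIntegrable a y) ((hWs b).intervalIntegrable y b)).symm
  rw [hsplit]
  refine (hasDerivAt_integral_of_continuous_partial hW hdW hd a y y).add ?_
  -- `∫ s in y..b, W s b = (b - y) W y y + o(b - y)` by joint continuity of `W` at `(y, y)`
  rw [hasDerivAt_iff_isLittleO, Asymptotics.isLittleO_iff]
  intro ε hε
  obtain ⟨δ, hδ, hball⟩ := Metric.continuousAt_iff.mp (hW.continuousAt (x := (y, y))) ε hε
  filter_upwards [Metric.ball_mem_nhds y hδ] with b hb
  rw [Metric.mem_ball] at hb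
  have hle : ∀ s ∈ uIoc y b, ‖W s b - W y y‖ ≤ ε := fun s hs => by
    have hs' : dist s y ≤ dist b y := abs_sub_left_of_mem_uIcc (uIoc_subset_uIcc hs)
    have h := hball (x := (s, b)) (by simpa [Prod.dist_eq] using ⟨hs'.trans_lt hb, hb⟩)
    simpa [Real.dist_eq] using h.le
  calc ‖(∫ s in y..b, W s b) - (∫ s in y..y, W s y) - (b - y) • W y y‖
      = ‖∫ s in y..b, (W s b - W y y)‖ := by
        rw [integral_same, integral_sub ((hWs b).intervalIntegrable y b)
          (intervalIntegrable_const (μ := volume)), integral_const, sub_zero]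
    _ ≤ ε * |b - y| := norm_integral_le_of_norm_le_const hle
    _ = ε * ‖b - y‖ := by rw [Real.norm_eq_abs]

theorem hasDerivAt_integral_lower_of_continuous_partial
    (hW : Continuous (Function.uncurry W)) (hdW : Continuous (Function.uncurry dW))
    (hd : ∀ s b, HasDerivAt (W s) (dW s b) b) (c y : ℝ) :
    HasDerivAt (fun b => ∫ s in b..c, W s b) ((∫ s in y..c, dW s y) - W y y) y := by
  have hWs : ∀ b, Continuous fun s => W s b := fun b => hW.comp₂ continuous_id continuous_const
  have hdWs : Continuous fun s => dW s y := hdW.comp₂ continuous_id continuous_const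
  have hsplit : (fun b => ∫ s in b..c, W s b) =
      fun b => (∫ s in (0:ℝ)..c, W s b) - ∫ s in (0:ℝ)..b, W s b := by
    ext b
    exact (integral_interval_sub_left ((hWs b).intervalIntegrable 0 c)
      ((hWs b).intervalIntegrable 0 b)).symm
  have hval : (∫ s in y..c, dW s y) - W y y =
      (∫ s in (0:ℝ)..c, dW s y) - ((∫ s in (0:ℝ)..y, dW s y) + W y y) := by
    rw [← integral_interval_sub_left (hdWs.intervalIntegrable 0 c) (hdWs.intervalIntegrable 0 y)]
    ring
  rw [hsplit, hval]
  exact (hasDerivAt_integral_of_continuous_partial hW hdW hd 0 c y).fun_sub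
    (hasDerivAt_integral_upper_of_continuous_partial hW hdW hd 0 y)

theorem continuous_parametric_intervalIntegral_of_continuous_bounds {X : Type*}
    [TopologicalSpace X] {f : X → ℝ → ℝ} (hf : Continuous (Function.uncurry f))
    {a b : X → ℝ} (ha : Continuous a) (hb : Continuous b) :
    Continuous fun x => ∫ t in a x..b x, f x t := by
  have h := (continuous_parametric_intervalIntegral_of_continuous (a₀ := 0) (μ := volume) hf hb).sub
    (continuous_parametric_intervalIntegral_of_continuous (a₀ := 0) (μ := volume) hf ha)
  refine h.congr fun x => integral_interval_sub_left ?_ ?_ <;>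
    exact (hf.comp₂ continuous_const continuous_id).intervalIntegrable (μ := volume) _ _

variable {F : ℝ → ℝ → ℝ}

theorem hasDerivAt_integral_sub_mul_upper (hW : Continuous (Function.uncurry W))
    (hdW : Continuous (Function.uncurry dW)) (hd : ∀ s b, HasDerivAt (W s) (dW s b) b)
    (a y : ℝ) :
    HasDerivAt (fun b => ∫ s in a..b, (b - s) * W s b)
      ((∫ s in a..y, W s y) + ∫ s in a..y, (y - s) * dW s y) y := by
  have h := hasDerivAt_integral_upper_of_continuous_partial (W := fun s b => (b - s) * W s b)
    (dW := fun s b => W s b + (b - s) * dW s b) (by fun_prop) (by fun_prop)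
    (fun s b => by simpa using ((hasDerivAt_id' b).sub_const s).fun_mul (hd s b)) a y
  have hWy : Continuous fun s => W s y := by fun_prop
  have hdWy : Continuous fun s => (y - s) * dW s y := by fun_prop
  rwa [sub_self, zero_mul, add_zero,
    integral_add (hWy.intervalIntegrable _ _) (hdWy.intervalIntegrable _ _)] at h

theorem hasDerivAt_integral_integral_lower (hF : Continuous (Function.uncurry F)) (c K : ℝ) :
    HasDerivAt (fun K => ∫ y in K..c, ∫ x in K..y, F x y) (-∫ y in K..c, F K y) K := by
  have hinner : ∀ y K, HasDerivAt (fun K => ∫ x in K..y, F x y) (-F K y) K := fun y K => by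
    have hFy : Continuous fun x => F x y := hF.comp₂ continuous_id continuous_const
    exact integral_hasDerivAt_left (hFy.intervalIntegrable _ _)
      (hFy.stronglyMeasurableAtFilter _ _) hFy.continuousAt
  have h := hasDerivAt_integral_lower_of_continuous_partial (W := fun y K => ∫ x in K..y, F x y)
    (dW := fun y K => -F K y)
    (continuous_parametric_intervalIntegral_of_continuous_bounds (by fun_prop) continuous_snd
      continuous_fst) (by fun_prop) (fun y K => hinner y K) c K
  simpa [integral_neg] using h

theorem hasDerivAt_integral_integral_sub_mul_lower (hF : Continuous (Function.uncurry F))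
    (c K : ℝ) :
    HasDerivAt (fun K => ∫ y in K..c, ∫ x in K..y, (x - K) * F x y)
      (-∫ y in K..c, ∫ x in K..y, F x y) K := by
  have hinner : ∀ y K, HasDerivAt (fun K => ∫ x in K..y, (x - K) * F x y)
      (-∫ x in K..y, F x y) K := fun y K => by
    have h := hasDerivAt_integral_lower_of_continuous_partial
      (W := fun x K => (x - K) * F x y) (dW := fun x _ => -F x y) (by fun_prop) (by fun_prop)
      (fun x K => by simpa using ((hasDerivAt_id K).const_sub x).mul_const (F x y)) y K
    simpa [integral_neg] using h
  have hv : Continuous fun p : ℝ × ℝ => ∫ x in p.2..p.1, F x p.1 :=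
    continuous_parametric_intervalIntegral_of_continuous_bounds (by fun_prop) continuous_snd
      continuous_fst
  have h := hasDerivAt_integral_lower_of_continuous_partial
    (W := fun y K => ∫ x in K..y, (x - K) * F x y) (dW := fun y K => -∫ x in K..y, F x y)
    (continuous_parametric_intervalIntegral_of_continuous_bounds (by fun_prop) continuous_snd
      continuous_fst) hv.neg (fun y K => hinner y K) c K
  simpa [integral_neg] using h

end intervalIntegral

theorem taylor_integral_remainder_two {f : ℝ → ℝ} (hf : ContDiff ℝ 2 f) (a x : ℝ) :
    f x = f a + (x - a) * deriv f a + ∫ s in a..x, (x - s) * deriv (deriv f) s := by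
  rcases eq_or_ne a x with rfl | hax
  · simp
  have hu : UniqueDiffOn ℝ (uIcc a x) := uniqueDiffOn_uIcc hax
  have h := taylor_integral_remainder (n := 1) (x₀ := a) (x := x) hf.contDiffOn
  rw [integral_congr fun s hs => by
    rw [iteratedDerivWithin_eq_iteratedDeriv hu hf.contDiffAt hs, iteratedDeriv_succ,
      iteratedDeriv_one]] at h
  simp only [taylorWithinEval_succ, taylor_within_zero_eval, CharP.cast_eq_zero, zero_add,
    Nat.factorial_zero, Nat.factorial_one, Nat.cast_one, mul_one, inv_one, pow_one, one_mul,
    div_one, smul_eq_mul, iteratedDerivWithin_one,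
    ((hf.differentiable two_ne_zero) a).derivWithin (hu a left_mem_uIcc)] at h
  linear_combination h

noncomputable def partialDeriv (f : ℝ → ℝ → ℝ → ℝ) (v : ℝ × ℝ × ℝ) (x y t : ℝ) : ℝ :=
  fderiv ℝ (fun p : ℝ × ℝ × ℝ => f p.1 p.2.1 p.2.2) (x, y, t) v

section partialDeriv

variable {f : ℝ → ℝ → ℝ → ℝ}

theorem contDiff_partialDeriv {n : WithTop ℕ∞}
    (hf : ContDiff ℝ (n + 1) fun p : ℝ × ℝ × ℝ => f p.1 p.2.1 p.2.2) (v : ℝ × ℝ × ℝ) :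
    ContDiff ℝ n fun p : ℝ × ℝ × ℝ => partialDeriv f v p.1 p.2.1 p.2.2 :=
  (hf.fderiv_right le_rfl).clm_apply contDiff_const

theorem hasDerivAt_partialDeriv_fst (hf : Differentiable ℝ fun p : ℝ × ℝ × ℝ => f p.1 p.2.1 p.2.2)
    (x y t : ℝ) : HasDerivAt (fun x' => f x' y t) (partialDeriv f (1, 0, 0) x y t) x := by
  have hc : HasDerivAt (fun x' : ℝ => ((x', y, t) : ℝ × ℝ × ℝ)) (1, 0, 0) x :=
    (hasDerivAt_id x).prodMk (hasDerivAt_const _ _)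
  exact (hf (x, y, t)).hasFDerivAt.comp_hasDerivAt x hc

theorem hasDerivAt_partialDeriv_snd (hf : Differentiable ℝ fun p : ℝ × ℝ × ℝ => f p.1 p.2.1 p.2.2)
    (x y t : ℝ) : HasDerivAt (fun y' => f x y' t) (partialDeriv f (0, 1, 0) x y t) y := by
  have hc : HasDerivAt (fun y' : ℝ => ((x, y', t) : ℝ × ℝ × ℝ)) (0, 1, 0) y :=
    (hasDerivAt_const _ _).prodMk ((hasDerivAt_id y).prodMk (hasDerivAt_const _ _))
  exact (hf (x, y, t)).hasFDerivAt.comp_hasDerivAt y hc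

theorem hasDerivAt_partialDeriv_thd (hf : Differentiable ℝ fun p : ℝ × ℝ × ℝ => f p.1 p.2.1 p.2.2)
    (x y t : ℝ) : HasDerivAt (fun t' => f x y t') (partialDeriv f (0, 0, 1) x y t) t := by
  have hc : HasDerivAt (fun t' : ℝ => ((x, y, t') : ℝ × ℝ × ℝ)) (0, 0, 1) t :=
    (hasDerivAt_const _ _).prodMk ((hasDerivAt_const _ _).prodMk (hasDerivAt_id t))
  exact (hf (x, y, t)).hasFDerivAt.comp_hasDerivAt t hc

end partialDeriv

noncomputable def diffusionTerm (σ φ : ℝ → ℝ → ℝ → ℝ) (x y t : ℝ) : ℝ :=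
  σ x y t ^ 2 * x ^ 2 * φ x y t

/-- The value of `∂²(σ²x²φ)/∂x²` forced by the forward equation with drift `m`. -/
noncomputable def kfeSecondDeriv (m : ℝ) (φ : ℝ → ℝ → ℝ → ℝ) (x y t : ℝ) : ℝ :=
  2 * partialDeriv φ (0, 0, 1) x y t + 2 * m * (φ x y t + x * partialDeriv φ (1, 0, 0) x y t)

def ForwardEquationAt (S₀ m T : ℝ) (σ φ : ℝ → ℝ → ℝ → ℝ) : Prop :=
  ∀ x y : ℝ, 0 < x → x < y → S₀ < y →
    deriv (fun t' => φ x y t') T + m * deriv (fun x' => x' * φ x' y T) x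
      - 1 / 2 * deriv (deriv fun x' => diffusionTerm σ φ x' y T) x = 0

def DiagonalBoundaryConditionAt (S₀ m T : ℝ) (σ φ : ℝ → ℝ → ℝ → ℝ) : Prop :=
  ∀ y : ℝ, S₀ < y →
    deriv (fun x' => diffusionTerm σ φ x' y T) y
      + 1 / 2 * deriv (fun y' => diffusionTerm σ φ y y' T) y = m * y * φ y y T

section ForwardEquation

variable {S₀ m T y : ℝ} {σ φ : ℝ → ℝ → ℝ → ℝ}

theorem contDiff_kfeSecondDeriv (hφ : ContDiff ℝ 2 fun p : ℝ × ℝ × ℝ => φ p.1 p.2.1 p.2.2) :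
    ContDiff ℝ 1 fun p : ℝ × ℝ × ℝ => kfeSecondDeriv m φ p.1 p.2.1 p.2.2 := by
  have ht := contDiff_partialDeriv (n := 1) hφ (0, 0, 1)
  have hx := contDiff_partialDeriv (n := 1) hφ (1, 0, 0)
  have h1 : ContDiff ℝ 1 fun p : ℝ × ℝ × ℝ => φ p.1 p.2.1 p.2.2 := hφ.of_le one_le_two
  unfold kfeSecondDeriv
  fun_prop

theorem contDiff_diffusionTerm (hφ : ContDiff ℝ 2 fun p : ℝ × ℝ × ℝ => φ p.1 p.2.1 p.2.2)
    (hσ : ContDiff ℝ 2 fun x => σ x y T) : ContDiff ℝ 2 fun x => diffusionTerm σ φ x y T := by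
  unfold diffusionTerm
  fun_prop

theorem deriv_diffusionTerm_zero (hσ : DifferentiableAt ℝ (fun x => σ x y T) 0)
    (hφ : DifferentiableAt ℝ (fun x => φ x y T) 0) :
    deriv (fun x => diffusionTerm σ φ x y T) 0 = 0 := by
  have h := ((hσ.hasDerivAt.fun_pow 2).fun_mul ((hasDerivAt_id' 0).fun_pow 2)).fun_mul
    hφ.hasDerivAt
  simpa [diffusionTerm] using h.deriv

theorem deriv_deriv_diffusionTerm_eqOn
    (hφ : ContDiff ℝ 2 fun p : ℝ × ℝ × ℝ => φ p.1 p.2.1 p.2.2)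
    (hσ : ContDiff ℝ 2 fun x => σ x y T) (hKFE : ForwardEquationAt S₀ m T σ φ)
    (hS₀ : 0 ≤ S₀) (hy : S₀ < y) :
    EqOn (deriv (deriv fun x => diffusionTerm σ φ x y T)) (fun x => kfeSecondDeriv m φ x y T)
      (Icc 0 y) := by
  have hφ1 : Differentiable ℝ fun p : ℝ × ℝ × ℝ => φ p.1 p.2.1 p.2.2 :=
    hφ.differentiable two_ne_zero
  have hinterior : EqOn (deriv (deriv fun x => diffusionTerm σ φ x y T))
      (fun x => kfeSecondDeriv m φ x y T) (Ioo 0 y) := fun x hx => by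
    have h := hKFE x y hx.1 hx.2 hy
    rw [(hasDerivAt_partialDeriv_thd hφ1 x y T).deriv,
      ((hasDerivAt_id' x).fun_mul (hasDerivAt_partialDeriv_fst hφ1 x y T)).deriv] at h
    simp only [kfeSecondDeriv]
    linear_combination (-2 : ℝ) * h
  have hR : Continuous fun x => kfeSecondDeriv m φ x y T := by
    have := (contDiff_kfeSecondDeriv (m := m) hφ).continuous
    fun_prop
  refine hinterior.of_subset_closure
    ((contDiff_diffusionTerm hφ hσ).deriv' (n := 1)).continuous_deriv_one.continuousOn
    hR.continuousOn Ioo_subset_Icc_self ?_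
  rw [closure_Ioo (hS₀.trans_lt hy).ne]

theorem diffusionTerm_eq_integral
    (hφ : ContDiff ℝ 2 fun p : ℝ × ℝ × ℝ => φ p.1 p.2.1 p.2.2)
    (hσ : ContDiff ℝ 2 fun x => σ x y T) (hKFE : ForwardEquationAt S₀ m T σ φ)
    (hS₀ : 0 ≤ S₀) (hy : S₀ < y) {x : ℝ} (hx : 0 ≤ x) (hxy : x ≤ y) :
    diffusionTerm σ φ x y T = ∫ s in (0 : ℝ)..x, (x - s) * kfeSecondDeriv m φ s y T := by
  rw [taylor_integral_remainder_two (contDiff_diffusionTerm hφ hσ) 0 x,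
    deriv_diffusionTerm_zero (hσ.differentiable two_ne_zero 0)
      (hasDerivAt_partialDeriv_fst (hφ.differentiable two_ne_zero) 0 y T).differentiableAt]
  have heq := deriv_deriv_diffusionTerm_eqOn hφ hσ hKFE hS₀ hy
  have hg0 : diffusionTerm σ φ 0 y T = 0 := by simp [diffusionTerm]
  rw [hg0, mul_zero, zero_add, zero_add]
  refine integral_congr fun s hs => ?_
  rw [uIcc_of_le hx] at hs
  simp only [heq ⟨hs.1, hs.2.trans hxy⟩]

theorem deriv_diffusionTerm_eq_integral
    (hφ : ContDiff ℝ 2 fun p : ℝ × ℝ × ℝ => φ p.1 p.2.1 p.2.2)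
    (hσ : ContDiff ℝ 2 fun x => σ x y T) (hKFE : ForwardEquationAt S₀ m T σ φ)
    (hS₀ : 0 ≤ S₀) (hy : S₀ < y) {x : ℝ} (hx : 0 ≤ x) (hxy : x ≤ y) :
    deriv (fun x' => diffusionTerm σ φ x' y T) x = ∫ s in (0 : ℝ)..x, kfeSecondDeriv m φ s y T := by
  have hg := (contDiff_diffusionTerm hφ hσ).deriv' (n := 1)
  have heq := deriv_deriv_diffusionTerm_eqOn hφ hσ hKFE hS₀ hy
  rw [← integral_congr fun s hs => heq (by rw [uIcc_of_le hx] at hs; exact ⟨hs.1, hs.2.trans hxy⟩),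
    integral_deriv_eq_sub (fun s _ => hg.differentiable one_ne_zero s)
      (hg.continuous_deriv_one.intervalIntegrable _ _),
    deriv_diffusionTerm_zero (hσ.differentiable two_ne_zero 0)
      (hasDerivAt_partialDeriv_fst (hφ.differentiable two_ne_zero) 0 y T).differentiableAt, sub_zero]

theorem deriv_diffusionTerm_snd_eq_integral
    (hφ : ContDiff ℝ 2 fun p : ℝ × ℝ × ℝ => φ p.1 p.2.1 p.2.2)
    (hσx : ∀ y, ContDiff ℝ 2 fun x => σ x y T) (hσy : ContDiff ℝ 1 fun y' => σ y y' T)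
    (hKFE : ForwardEquationAt S₀ m T σ φ) (hS₀ : 0 ≤ S₀) (hy : S₀ < y) :
    deriv (fun y' => diffusionTerm σ φ y y' T) y =
      ∫ s in (0 : ℝ)..y, (y - s) * partialDeriv (kfeSecondDeriv m φ) (0, 1, 0) s y T := by
  have hR := contDiff_kfeSecondDeriv (m := m) hφ
  have hRc := hR.continuous
  have hdRc := (contDiff_partialDeriv (n := 0) hR (0, 1, 0)).continuous
  have hleibniz := hasDerivAt_integral_of_continuous_partial
    (W := fun s b => (y - s) * kfeSecondDeriv m φ s b T)
    (dW := fun s b => (y - s) * partialDeriv (kfeSecondDeriv m φ) (0, 1, 0) s b T)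
    (by fun_prop) (by fun_prop)
    (fun s b => (hasDerivAt_partialDeriv_snd (hR.differentiable one_ne_zero) s b T).const_mul _)
    0 y y
  have hrepr : ∀ b ∈ Ici y, diffusionTerm σ φ y b T =
      ∫ s in (0 : ℝ)..y, (y - s) * kfeSecondDeriv m φ s b T := fun b hb =>
    diffusionTerm_eq_integral hφ (hσx b) hKFE hS₀ (hy.trans_le hb) (hS₀.trans hy.le) hb
  have hdiff : DifferentiableAt ℝ (fun y' => diffusionTerm σ φ y y' T) y := by
    have := hσy.differentiable one_ne_zero y
    have := (hasDerivAt_partialDeriv_snd (hφ.differentiable two_ne_zero) y y T).differentiableAt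
    unfold diffusionTerm
    fun_prop
  exact (uniqueDiffOn_Ici y y self_mem_Ici).eq_deriv _ hdiff.hasDerivAt.hasDerivWithinAt
    (hleibniz.hasDerivWithinAt.congr hrepr (hrepr y self_mem_Ici))

/-- `σ²x²φ` on the diagonal, in the integral form that the forward equation gives it
(`diffusionTerm_eq_integral`); unlike `y ↦ diffusionTerm σ φ y y T` it is differentiable. -/
noncomputable def diagonalDiffusionTerm (m : ℝ) (φ : ℝ → ℝ → ℝ → ℝ) (T y : ℝ) : ℝ :=
  ∫ s in (0 : ℝ)..y, (y - s) * kfeSecondDeriv m φ s y T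

theorem diagonalDiffusionTerm_eq
    (hφ : ContDiff ℝ 2 fun p : ℝ × ℝ × ℝ => φ p.1 p.2.1 p.2.2)
    (hσx : ∀ y, ContDiff ℝ 2 fun x => σ x y T) (hσy : Continuous fun y => σ S₀ y T)
    (hKFE : ForwardEquationAt S₀ m T σ φ) (hS₀ : 0 ≤ S₀) (hy : S₀ ≤ y) :
    diagonalDiffusionTerm m φ T y = diffusionTerm σ φ y y T := by
  rcases hy.lt_or_eq with hy | rfl
  · exact (diffusionTerm_eq_integral hφ (hσx y) hKFE hS₀ hy (hS₀.trans hy.le) le_rfl).symm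
  -- at the corner the forward equation is not available: pass to the limit from `y > S₀`
  have hφc := hφ.continuous
  have hRc := (contDiff_kfeSecondDeriv (m := m) hφ).continuous
  have hlhs : Continuous fun b => ∫ s in (0 : ℝ)..S₀, (S₀ - s) * kfeSecondDeriv m φ s b T :=
    continuous_parametric_intervalIntegral_of_continuous' (by fun_prop) _ _
  have hrhs : Continuous fun b => diffusionTerm σ φ S₀ b T := by
    unfold diffusionTerm
    fun_prop
  refine tendsto_nhds_unique ((hlhs.tendsto S₀).mono_left nhdsWithin_le_nhds :
    Tendsto _ (𝓝[>] S₀) _) (((hrhs.tendsto S₀).mono_left nhdsWithin_le_nhds).congr' ?_)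
  exact eventually_nhdsWithin_of_forall fun b hb =>
    diffusionTerm_eq_integral hφ (hσx b) hKFE hS₀ hb hS₀ hb.le

theorem hasDerivAt_diagonalDiffusionTerm
    (hφ : ContDiff ℝ 2 fun p : ℝ × ℝ × ℝ => φ p.1 p.2.1 p.2.2) (m T y : ℝ) :
    HasDerivAt (diagonalDiffusionTerm m φ T)
      ((∫ s in (0 : ℝ)..y, kfeSecondDeriv m φ s y T)
        + ∫ s in (0 : ℝ)..y, (y - s) * partialDeriv (kfeSecondDeriv m φ) (0, 1, 0) s y T) y := by
  have hR := contDiff_kfeSecondDeriv (m := m) hφ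
  have hRc := hR.continuous
  have hdRc := (contDiff_partialDeriv (n := 0) hR (0, 1, 0)).continuous
  exact hasDerivAt_integral_sub_mul_upper (W := fun s y => kfeSecondDeriv m φ s y T)
    (by fun_prop) (by fun_prop)
    (fun s b => hasDerivAt_partialDeriv_snd (hR.differentiable one_ne_zero) s b T) 0 y

theorem integral_mul_partialDeriv_thd_sub
    (hφ : ContDiff ℝ 2 fun p : ℝ × ℝ × ℝ => φ p.1 p.2.1 p.2.2) (m y T : ℝ) :
    (∫ s in (0 : ℝ)..y, s * partialDeriv φ (0, 0, 1) s y T) - m * ∫ s in (0 : ℝ)..y, s * φ s y T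
      = 1 / 2 * (∫ s in (0 : ℝ)..y, s * kfeSecondDeriv m φ s y T) - m * (y ^ 2 * φ y y T) := by
  have hφ1 := hφ.differentiable two_ne_zero
  have hφc := hφ.continuous
  have hφx := (contDiff_partialDeriv (n := 1) hφ (1, 0, 0)).continuous
  have hφt := (contDiff_partialDeriv (n := 1) hφ (0, 0, 1)).continuous
  have hR := (contDiff_kfeSecondDeriv (m := m) hφ).continuous
  have hftc : ∫ s in (0 : ℝ)..y, (2 * s * φ s y T + s ^ 2 * partialDeriv φ (1, 0, 0) s y T)
      = y ^ 2 * φ y y T := by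
    rw [integral_eq_sub_of_hasDerivAt (f := fun s => s ^ 2 * φ s y T)
      (fun s _ => by
        simpa using (hasDerivAt_pow 2 s).fun_mul (hasDerivAt_partialDeriv_fst hφ1 s y T))
      ((by fun_prop : Continuous _).intervalIntegrable _ _)]
    simp
  simp only [← hftc, ← intervalIntegral.integral_const_mul]
  rw [← intervalIntegral.integral_sub, ← intervalIntegral.integral_sub]
  · exact integral_congr fun s _ => by simp only [kfeSecondDeriv]; ring
  all_goals exact Continuous.intervalIntegrable (by fun_prop) _ _

/-- Along the diagonal, the `T`-derivative integrand of the zero-strike price is an exact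
derivative. -/
theorem hasDerivAt_mul_diagonalDiffusionTerm
    (hφ : ContDiff ℝ 2 fun p : ℝ × ℝ × ℝ => φ p.1 p.2.1 p.2.2)
    (hσx : ∀ y, ContDiff ℝ 2 fun x => σ x y T) (hσy : ContDiff ℝ 1 fun y' => σ y y' T)
    (hKFE : ForwardEquationAt S₀ m T σ φ) (hDBC : DiagonalBoundaryConditionAt S₀ m T σ φ)
    (hS₀ : 0 ≤ S₀) (hy : S₀ < y) :
    HasDerivAt (fun y => -1 / 2 * (y * diagonalDiffusionTerm m φ T y))
      ((∫ s in (0 : ℝ)..y, s * partialDeriv φ (0, 0, 1) s y T)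
        - m * ∫ s in (0 : ℝ)..y, s * φ s y T) y := by
  have hR := (contDiff_kfeSecondDeriv (m := m) hφ).continuous
  have hdbc := hDBC y hy
  rw [deriv_diffusionTerm_eq_integral hφ (hσx y) hKFE hS₀ hy (hS₀.trans hy.le) le_rfl,
    deriv_diffusionTerm_snd_eq_integral hφ hσx hσy hKFE hS₀ hy] at hdbc
  have hdiag : diagonalDiffusionTerm m φ T y = y * (∫ s in (0 : ℝ)..y, kfeSecondDeriv m φ s y T)
      - ∫ s in (0 : ℝ)..y, s * kfeSecondDeriv m φ s y T := by
    simp only [diagonalDiffusionTerm, sub_mul]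
    rw [intervalIntegral.integral_sub, intervalIntegral.integral_const_mul] <;>
      exact Continuous.intervalIntegrable (by fun_prop) _ _
  refine (((hasDerivAt_id' y).fun_mul (hasDerivAt_diagonalDiffusionTerm hφ m T y)).const_mul
    (-1 / 2)).congr_deriv ?_
  linear_combination -(integral_mul_partialDeriv_thd_sub hφ m y T) - 1 / 2 * hdiag - y * hdbc

theorem integral_forward_identity
    (hφ : ContDiff ℝ 2 fun p : ℝ × ℝ × ℝ => φ p.1 p.2.1 p.2.2)
    (hσx : ∀ y, ContDiff ℝ 2 fun x => σ x y T) (hσy : ∀ x, ContDiff ℝ 1 fun y => σ x y T)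
    (hKFE : ForwardEquationAt S₀ m T σ φ) (hDBC : DiagonalBoundaryConditionAt S₀ m T σ φ)
    (hcorner : φ S₀ S₀ T = 0) (hS₀ : 0 ≤ S₀) {B : ℝ} (hB : S₀ < B) :
    (∫ y in S₀..B, ∫ s in (0 : ℝ)..y, s * partialDeriv φ (0, 0, 1) s y T)
      - m * ∫ y in S₀..B, ∫ s in (0 : ℝ)..y, s * φ s y T
      = -1 / 2 * (B * diffusionTerm σ φ B B T) := by
  have hφc := hφ.continuous
  have hφt := (contDiff_partialDeriv (n := 1) hφ (0, 0, 1)).continuous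
  have hI₁ : Continuous fun y => ∫ s in (0 : ℝ)..y, s * partialDeriv φ (0, 0, 1) s y T :=
    continuous_parametric_intervalIntegral_of_continuous (by fun_prop) continuous_id
  have hI₀ : Continuous fun y => ∫ s in (0 : ℝ)..y, s * φ s y T :=
    continuous_parametric_intervalIntegral_of_continuous (by fun_prop) continuous_id
  have hdiag : Continuous fun y => -1 / 2 * (y * diagonalDiffusionTerm m φ T y) :=
    continuous_const.mul (continuous_id.mul (continuous_iff_continuousAt.2 fun y =>
      (hasDerivAt_diagonalDiffusionTerm hφ m T y).continuousAt))
  rw [← intervalIntegral.integral_const_mul, ← intervalIntegral.integral_sub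
      (hI₁.intervalIntegrable _ _) (Continuous.intervalIntegrable (by fun_prop) _ _),
    integral_eq_sub_of_hasDeriv_right_of_le hB.le hdiag.continuousOn
      (fun y hy => (hasDerivAt_mul_diagonalDiffusionTerm hφ hσx (hσy y) hKFE hDBC hS₀
        hy.1).hasDerivWithinAt)
      (Continuous.intervalIntegrable (by fun_prop) _ _),
    diagonalDiffusionTerm_eq hφ hσx (hσy S₀).continuous hKFE hS₀ le_rfl,
    diagonalDiffusionTerm_eq hφ hσx (hσy S₀).continuous hKFE hS₀ hB.le]
  simp [diffusionTerm, hcorner]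

theorem hasDerivAt_disc {r : ℝ → ℝ} (hr : Continuous r) (T : ℝ) :
    HasDerivAt (disc r) (disc r T * -r T) T :=
  (hr.integral_hasStrictDerivAt 0 T).hasDerivAt.neg.exp

theorem hasDerivAt_capQ {q : ℝ → ℝ} (hq : Continuous q) (T : ℝ) :
    HasDerivAt (capQ q) (capQ q T * q T) T :=
  (hq.integral_hasStrictDerivAt 0 T).hasDerivAt.exp

theorem hasDerivAt_upOutCallTilde_zero {S₀ : ℝ} {r q : ℝ → ℝ} {φ : ℝ → ℝ → ℝ → ℝ}
    (hS₀ : 0 ≤ S₀) (hr : Continuous r) (hq : Continuous q)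
    (hφ : ContDiff ℝ 1 fun p : ℝ × ℝ × ℝ => φ p.1 p.2.1 p.2.2) (B T : ℝ) :
    HasDerivAt (fun T' => upOutCallTilde S₀ r q φ 0 B T')
      (capQ q T * disc r T * ((∫ y in S₀..B, ∫ s in (0 : ℝ)..y, s * partialDeriv φ (0, 0, 1) s y T)
        - (r T - q T) * ∫ y in S₀..B, ∫ s in (0 : ℝ)..y, s * φ s y T)) T := by
  have hφc := hφ.continuous
  have hφt := (contDiff_partialDeriv (n := 0) hφ (0, 0, 1)).continuous
  have hinner : ∀ y t, HasDerivAt (fun t => ∫ s in (0 : ℝ)..y, s * φ s y t)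
      (∫ s in (0 : ℝ)..y, s * partialDeriv φ (0, 0, 1) s y t) t := fun y t =>
    hasDerivAt_integral_of_continuous_partial (W := fun s t => s * φ s y t)
      (by fun_prop) (by fun_prop)
      (fun s t => (hasDerivAt_partialDeriv_thd (hφ.differentiable one_ne_zero) s y t).const_mul s)
      0 y t
  have hI := hasDerivAt_integral_of_continuous_partial
    (W := fun y t => ∫ s in (0 : ℝ)..y, s * φ s y t)
    (dW := fun y t => ∫ s in (0 : ℝ)..y, s * partialDeriv φ (0, 0, 1) s y t)
    (continuous_parametric_intervalIntegral_of_continuous (by fun_prop) continuous_fst)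
    (continuous_parametric_intervalIntegral_of_continuous (by fun_prop) continuous_fst)
    hinner S₀ B T
  have hprice : (fun T' => upOutCallTilde S₀ r q φ 0 B T') =
      fun T' => capQ q T' * (disc r T' * ∫ y in S₀..B, ∫ s in (0 : ℝ)..y, s * φ s y T') := by
    ext T'
    simp [upOutCallTilde, upOutCall, max_eq_right hS₀]
  rw [hprice]
  exact ((hasDerivAt_capQ hq T).fun_mul ((hasDerivAt_disc hr T).fun_mul hI)).congr_deriv
    (by ring)

theorem deriv_deriv_upOutCallTilde {S₀ : ℝ} {r q : ℝ → ℝ} {φ : ℝ → ℝ → ℝ → ℝ}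
    (hφ : Continuous fun p : ℝ × ℝ × ℝ => φ p.1 p.2.1 p.2.2) {K : ℝ} (hK : S₀ < K) (B T : ℝ) :
    deriv (deriv fun K' => upOutCallTilde S₀ r q φ K' B T) K
      = capQ q T * disc r T * ∫ y in K..B, φ K y T := by
  have hF : Continuous (Function.uncurry fun x y => φ x y T) := by fun_prop
  have hfirst : deriv (fun K' => upOutCallTilde S₀ r q φ K' B T) =ᶠ[𝓝 K]
      fun K' => capQ q T * disc r T * -∫ y in K'..B, ∫ x in K'..y, φ x y T := by
    filter_upwards [lt_mem_nhds hK] with K' hK'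
    have hprice : (fun K'' => upOutCallTilde S₀ r q φ K'' B T) =ᶠ[𝓝 K'] fun K'' =>
        capQ q T * disc r T * ∫ y in K''..B, ∫ x in K''..y, (x - K'') * φ x y T := by
      filter_upwards [lt_mem_nhds hK'] with K'' hK''
      simp [upOutCallTilde, upOutCall, max_eq_left hK''.le, mul_assoc]
    rw [hprice.deriv_eq]
    exact ((hasDerivAt_integral_integral_sub_mul_lower hF B K').const_mul _).deriv
  rw [hfirst.deriv_eq]
  simpa using ((hasDerivAt_integral_integral_lower hF B K).neg.const_mul
    (capQ q T * disc r T)).deriv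

theorem hasDerivAt_deriv_deriv_upOutCallTilde {S₀ : ℝ} {r q : ℝ → ℝ} {φ : ℝ → ℝ → ℝ → ℝ}
    (hφ : Continuous fun p : ℝ × ℝ × ℝ => φ p.1 p.2.1 p.2.2) {B : ℝ} (hB : S₀ < B) (T : ℝ) :
    HasDerivAt (fun B' => deriv (deriv fun K' => upOutCallTilde S₀ r q φ K' B' T) B)
      (capQ q T * disc r T * φ B B T) B := by
  simp only [deriv_deriv_upOutCallTilde hφ hB]
  exact ((Continuous.integral_hasStrictDerivAt (by fun_prop) B B).hasDerivAt.const_mul _)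

theorem stmt_6_general (S₀ : ℝ) (hS₀ : 0 < S₀)
    (r q : ℝ → ℝ) (hr : Continuous r) (hq : Continuous q)
    (σ φ : ℝ → ℝ → ℝ → ℝ)
    (hσx : ∀ y t, ContDiff ℝ 2 fun x => σ x y t)
    (hσy : ∀ x t, ContDiff ℝ 1 fun y => σ x y t)
    (hφ : ContDiff ℝ 2 fun p : ℝ × ℝ × ℝ => φ p.1 p.2.1 p.2.2)
    -- Kolmogorov forward equation on Ω, t > 0
    (hKFE : ∀ x y t : ℝ, 0 < x → x < y → S₀ < y → 0 < t →
      deriv (fun t' => φ x y t') t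
        + (r t - q t) * deriv (fun x' => x' * φ x' y t) x
        - (1/2) * deriv (deriv (fun x' => (σ x' y t)^2 * x'^2 * φ x' y t)) x = 0)
    -- diagonal boundary condition at x = y > S₀, t > 0
    (hDBC : ∀ y t : ℝ, S₀ < y → 0 < t →
      deriv (fun x' => (σ x' y t)^2 * x'^2 * φ x' y t) y
        + (1/2) * deriv (fun y' => (σ y y' t)^2 * y^2 * φ y y' t) y
        = (r t - q t) * y * φ y y t)
    -- corner condition
    (hcorner : ∀ t : ℝ, 0 < t → φ S₀ S₀ t = 0) :
    ∀ B T : ℝ, S₀ < B → 0 < T →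
      (deriv (fun T' => upOutCallTilde S₀ r q φ 0 B T') T
          = -(1/2) * (σ B B T)^2 * B^3 * (disc r T * capQ q T * φ B B T)) ∧
      (deriv (fun T' => upOutCallTilde S₀ r q φ 0 B T') T
          = -(1/2) * (σ B B T)^2 * B^3
              * deriv (fun B' =>
                  deriv (deriv (fun K' => upOutCallTilde S₀ r q φ K' B' T)) B) B) := by
  intro B T hB hT
  have hforward := integral_forward_identity hφ (fun y => hσx y T) (fun x => hσy x T)
    (fun x y hx hxy hy => hKFE x y T hx hxy hy hT) (fun y hy => hDBC y T hy hT) (hcorner T hT)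
    hS₀.le hB
  have hzeroStrike : deriv (fun T' => upOutCallTilde S₀ r q φ 0 B T') T
      = -(1 / 2) * σ B B T ^ 2 * B ^ 3 * (disc r T * capQ q T * φ B B T) := by
    rw [(hasDerivAt_upOutCallTilde_zero hS₀.le hr hq (hφ.of_le one_le_two) B T).deriv, hforward,
      diffusionTerm]
    ring
  refine ⟨hzeroStrike, ?_⟩
  rw [hzeroStrike, (hasDerivAt_deriv_deriv_upOutCallTilde hφ.continuous hB T).deriv]
  ring

/-- Zero-strike (foreign no-touch) forward equation: under the KFE, the diagonal
boundary condition and the corner condition, for all `B > S₀`, `T > 0`,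
`∂C̃/∂T (0,B,T) = - ½ σ²(B,B,T) B³ D(T) Q(T) φ(B,B,T)`, equivalently
`∂C̃/∂T (0,B,T) = - ½ σ²(B,B,T) B³ (∂³C̃/∂K²∂B)(K,B,T)|_{K=B}`. -/
theorem stmt_6 (S₀ : ℝ) (hS₀ : 0 < S₀)
    (r q : ℝ → ℝ) (hr : Continuous r) (hq : Continuous q)
    (σ φ : ℝ → ℝ → ℝ → ℝ)
    (hσbd : ∃ M : ℝ, ∀ x y t, |σ x y t| ≤ M)
    (hσx : ∀ y t, ContDiff ℝ 2 fun x => σ x y t)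
    (hσy : ∀ x t, ContDiff ℝ 1 fun y => σ x y t)
    (hσt : ∀ x y, Continuous fun t => σ x y t)
    (hφ : ContDiff ℝ 2 fun p : ℝ × ℝ × ℝ => φ p.1 p.2.1 p.2.2)
    (hφbd : ∃ M : ℝ, ∀ p : ℝ × ℝ × ℝ,
      ‖fderiv ℝ (fun p : ℝ × ℝ × ℝ => φ p.1 p.2.1 p.2.2) p‖ ≤ M)
    -- Kolmogorov forward equation on Ω, t > 0
    (hKFE : ∀ x y t : ℝ, 0 < x → x < y → S₀ < y → 0 < t →
      deriv (fun t' => φ x y t') t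
        + (r t - q t) * deriv (fun x' => x' * φ x' y t) x
        - (1/2) * deriv (deriv (fun x' => (σ x' y t)^2 * x'^2 * φ x' y t)) x = 0)
    -- diagonal boundary condition at x = y > S₀, t > 0
    (hDBC : ∀ y t : ℝ, S₀ < y → 0 < t →
      deriv (fun x' => (σ x' y t)^2 * x'^2 * φ x' y t) y
        + (1/2) * deriv (fun y' => (σ y y' t)^2 * y^2 * φ y y' t) y
        = (r t - q t) * y * φ y y t)
    -- corner condition
    (hcorner : ∀ t : ℝ, 0 < t → φ S₀ S₀ t = 0) :
    ∀ B T : ℝ, S₀ < B → 0 < T →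
      (deriv (fun T' => upOutCallTilde S₀ r q φ 0 B T') T
          = -(1/2) * (σ B B T)^2 * B^3 * (disc r T * capQ q T * φ B B T)) ∧
      (deriv (fun T' => upOutCallTilde S₀ r q φ 0 B T') T
          = -(1/2) * (σ B B T)^2 * B^3
              * deriv (fun B' =>
                  deriv (deriv (fun K' => upOutCallTilde S₀ r q φ K' B' T)) B) B) :=
  stmt_6_general S₀ hS₀ r q hr hq σ φ hσx hσy hφ hKFE hDBC hcorner
end ForwardEquation
end

section
/- For all 0 < K < B with B > S₀ and all T ≥ 0, the first-order derivatives of the up-and-out call price satisfy ∂C/∂K (K,B,T) = − D(T) ∫_{max(K,S₀)}^B ∫_K^y φ(x,y,T) dx dy and ∂C/∂B (K,B,T) = D(T) ∫_K^B (x−K) φ(x,B,T) dx. -/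
/-!
Split the outer integral at `max K S₀`. Over the fixed range `[max K S₀, B]` differentiate under
the integral sign: the inner integrand `(x - K) φ` vanishes at the moving endpoint `x = K`, so
`∂/∂K ∫_K^y (x - K) φ dx = -∫_K^y φ dx`. The remaining piece, over `[max s S₀, max K S₀]`, has
derivative `0` at `s = K` even though `max s S₀` is not differentiable at `s = S₀`: for `K < S₀`
it vanishes near `K`, and otherwise its range has length at most `|s - K|` while its integrand
`∫_s^y (x - s) φ dx` is close to its value `0` at `s = y = K`. The barrier derivative is the
fundamental theorem of calculus.
-/

open MeasureTheory Real Filter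

open intervalIntegral

section General

variable {E : Type*} [NormedAddCommGroup E] [NormedSpace ℝ E]

theorem continuous_intervalIntegral_of_continuous {X : Type*} [TopologicalSpace X]
    {g : X → ℝ → E} (hg : Continuous g.uncurry) {a b : X → ℝ} (ha : Continuous a)
    (hb : Continuous b) : Continuous fun p => ∫ t in a p..b p, g p t := by
  have hint (p : X) (u v : ℝ) : IntervalIntegrable (g p) volume u v :=
    (hg.comp (continuous_const.prodMk continuous_id)).intervalIntegrable u v
  have h_eq : (fun p => ∫ t in a p..b p, g p t)
      = fun p => (∫ t in (0 : ℝ)..b p, g p t) - ∫ t in (0 : ℝ)..a p, g p t := by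
    funext p
    exact (integral_interval_sub_left (hint p 0 (b p)) (hint p 0 (a p))).symm
  rw [h_eq]
  exact (continuous_parametric_intervalIntegral_of_continuous hg hb).sub
    (continuous_parametric_intervalIntegral_of_continuous hg ha)

theorem hasDerivAt_intervalIntegral_of_continuous_deriv {F F' : ℝ → ℝ → E}
    (hF : Continuous F.uncurry) (hF' : Continuous F'.uncurry)
    (hderiv : ∀ s y, HasDerivAt (fun s => F s y) (F' s y) s) (a b x₀ : ℝ) :
    HasDerivAt (fun s => ∫ y in a..b, F s y) (∫ y in a..b, F' x₀ y) x₀ := by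
  obtain ⟨M, hM⟩ := ((isCompact_closedBall x₀ 1).prod (isCompact_uIcc (a := a) (b := b))
    ).exists_bound_of_continuousOn hF'.continuousOn
  have hFs (s : ℝ) : Continuous (F s) := hF.comp (continuous_const.prodMk continuous_id)
  refine (hasDerivAt_integral_of_dominated_loc_of_deriv_le (bound := fun _ => M)
    (Metric.closedBall_mem_nhds x₀ one_pos)
    (Eventually.of_forall fun s => (hFs s).aestronglyMeasurable)
    ((hFs x₀).intervalIntegrable a b)
    (hF'.comp (continuous_const.prodMk continuous_id)).aestronglyMeasurable
    (ae_of_all _ fun y hy s hs => hM (s, y) ⟨hs, Set.uIoc_subset_uIcc hy⟩)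
    intervalIntegrable_const
    (ae_of_all _ fun y _ s _ => hderiv s y)).2

theorem hasDerivAt_integral_moving_limit_of_eq_zero {F : ℝ → ℝ → E} {a : ℝ → ℝ} {x₀ : ℝ}
    (hF : ContinuousAt F.uncurry (x₀, a x₀)) (hF₀ : F x₀ (a x₀) = 0)
    (ha : ∀ s, |a s - a x₀| ≤ |s - x₀|) :
    HasDerivAt (fun s => ∫ y in a s..a x₀, F s y) 0 x₀ := by
  rw [hasDerivAt_iff_isLittleO, Asymptotics.isLittleO_iff]
  intro ε hε
  obtain ⟨δ, hδ, hFδ⟩ := Metric.continuousAt_iff.mp hF ε hε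
  filter_upwards [Metric.ball_mem_nhds x₀ hδ] with s hs
  have hsx : |s - x₀| < δ := hs
  have h_small : ∀ y ∈ Set.uIoc (a s) (a x₀), ‖F s y‖ ≤ ε := by
    intro y hy
    have hya : |a x₀ - y| ≤ |s - x₀| :=
      (Set.abs_sub_right_of_mem_uIcc (Set.uIoc_subset_uIcc hy)).trans
        ((abs_sub_comm _ _).trans_le (ha s))
    have := hFδ (show dist (s, y) (x₀, a x₀) < δ from
      max_lt hsx ((abs_sub_comm y _).trans_le hya |>.trans_lt hsx))
    simpa [hF₀] using this.le
  simp only [integral_same, sub_zero, smul_zero]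
  calc ‖∫ y in a s..a x₀, F s y‖
    _ ≤ ε * |a x₀ - a s| := norm_integral_le_of_norm_le_const h_small
    _ ≤ ε * ‖s - x₀‖ := by
      rw [abs_sub_comm]; exact mul_le_mul_of_nonneg_left (ha s) hε.le

end General

theorem hasDerivAt_integral_sub_mul_left {g : ℝ → ℝ} (hg : Continuous g) (s y : ℝ) :
    HasDerivAt (fun s => ∫ x in s..y, (x - s) * g x) (-∫ x in s..y, g x) s := by
  have h_eq : (fun s => ∫ x in s..y, (x - s) * g x)
      = fun s => (∫ x in s..y, x * g x) - s * ∫ x in s..y, g x := by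
    funext s
    simp only [sub_mul, ← intervalIntegral.integral_const_mul]
    exact intervalIntegral.integral_sub ((continuous_id.mul hg).intervalIntegrable _ _)
      ((continuous_const.mul hg).intervalIntegrable _ _)
  have hg' (f : ℝ → ℝ) (hf : Continuous f) : HasDerivAt (fun s => ∫ x in s..y, f x) (-f s) s :=
    integral_hasDerivAt_left (hf.intervalIntegrable _ _) (hf.stronglyMeasurableAtFilter _ _)
      hf.continuousAt
  rw [h_eq]
  exact ((hg' (fun x => x * g x) (continuous_id.mul hg)).fun_sub
    ((hasDerivAt_id' s).fun_mul (hg' g hg))).congr_deriv (by ring)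

theorem hasDerivAt_integral_max_integral_sub_mul {f : ℝ → ℝ → ℝ} (hf : Continuous f.uncurry)
    (S₀ b K : ℝ) :
    HasDerivAt (fun s => ∫ y in max s S₀..b, ∫ x in s..y, (x - s) * f x y)
      (-∫ y in max K S₀..b, ∫ x in K..y, f x y) K := by
  set G : ℝ → ℝ → ℝ := fun s y => ∫ x in s..y, (x - s) * f x y
  have hfy : Continuous fun q : (ℝ × ℝ) × ℝ => f q.2 q.1.2 :=
    hf.comp (continuous_snd.prodMk continuous_fst.snd)
  have hG : Continuous G.uncurry := continuous_intervalIntegral_of_continuous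
    ((continuous_snd.sub continuous_fst.fst).mul hfy) continuous_fst continuous_snd
  have hG' : Continuous (fun s y => -∫ x in s..y, f x y).uncurry :=
    (continuous_intervalIntegral_of_continuous hfy continuous_fst continuous_snd).neg
  have hGs (s : ℝ) : Continuous (G s) := hG.comp (continuous_const.prodMk continuous_id)
  have h_split : (fun s => ∫ y in max s S₀..b, G s y)
      = fun s => (∫ y in max s S₀..max K S₀, G s y) + ∫ y in max K S₀..b, G s y := by
    funext s
    exact (integral_add_adjacent_intervals ((hGs s).intervalIntegrable _ _)
      ((hGs s).intervalIntegrable _ _)).symm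
  have h_moving : HasDerivAt (fun s => ∫ y in max s S₀..max K S₀, G s y) 0 K := by
    rcases lt_or_ge K S₀ with hKS | hSK
    · refine (hasDerivAt_const K (0 : ℝ)).congr_of_eventuallyEq ?_
      filter_upwards [eventually_lt_nhds hKS] with s hs
      rw [max_eq_right hs.le, max_eq_right hKS.le, integral_same]
    · refine hasDerivAt_integral_moving_limit_of_eq_zero hG.continuousAt ?_
        fun s => abs_max_sub_max_le_abs s K S₀
      simp only [G, max_eq_left hSK, integral_same]
  have h_fixed : HasDerivAt (fun s => ∫ y in max K S₀..b, G s y)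
      (∫ y in max K S₀..b, -∫ x in K..y, f x y) K :=
    hasDerivAt_intervalIntegral_of_continuous_deriv hG hG'
      (fun s y => hasDerivAt_integral_sub_mul_left
        (hf.comp (continuous_id.prodMk continuous_const)) s y) _ _ K
  rw [← intervalIntegral.integral_neg]
  show HasDerivAt (fun s => ∫ y in max s S₀..b, G s y) _ K
  rw [h_split]
  exact (h_moving.add h_fixed).congr_deriv (zero_add _)

theorem hasDerivAt_upOutCall_strike {φ : ℝ → ℝ → ℝ → ℝ} {T : ℝ}
    (hφ : Continuous fun p : ℝ × ℝ => φ p.1 p.2 T) (S₀ : ℝ) (r : ℝ → ℝ) (K B : ℝ) :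
    HasDerivAt (fun K' => upOutCall S₀ r φ K' B T)
      (-(disc r T) * ∫ y in (max K S₀)..B, ∫ x in K..y, φ x y T) K := by
  rw [neg_mul, ← mul_neg]
  exact (hasDerivAt_integral_max_integral_sub_mul (f := fun x y => φ x y T) hφ S₀ B K).const_mul
    (disc r T)

theorem hasDerivAt_upOutCall_barrier {φ : ℝ → ℝ → ℝ → ℝ} {T : ℝ}
    (hφ : Continuous fun p : ℝ × ℝ => φ p.1 p.2 T) (S₀ : ℝ) (r : ℝ → ℝ) (K B : ℝ) :
    HasDerivAt (fun B' => upOutCall S₀ r φ K B' T)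
      (disc r T * ∫ x in K..B, (x - K) * φ x B T) B := by
  have hG : Continuous fun y => ∫ x in K..y, (x - K) * φ x y T :=
    continuous_intervalIntegral_of_continuous (g := fun y x => (x - K) * φ x y T)
      ((continuous_snd.sub continuous_const).mul (hφ.comp continuous_swap))
      continuous_const continuous_id
  exact ((hG.integral_hasStrictDerivAt _ B).hasDerivAt).const_mul (disc r T)

theorem stmt_16_general (S₀ : ℝ) (r : ℝ → ℝ)
    (φ : ℝ → ℝ → ℝ → ℝ)
    (hφcont : ∀ t : ℝ, Continuous fun p : ℝ × ℝ => φ p.1 p.2 t) :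
    ∀ K B T : ℝ, 0 < K → K < B → S₀ < B → 0 ≤ T →
      (deriv (fun K' => upOutCall S₀ r φ K' B T) K
          = -(disc r T) * ∫ y in (max K S₀)..B, ∫ x in K..y, φ x y T) ∧
      (deriv (fun B' => upOutCall S₀ r φ K B' T) B
          = disc r T * ∫ x in K..B, (x - K) * φ x B T) := fun K B T _ _ _ _ =>
  ⟨(hasDerivAt_upOutCall_strike (hφcont T) S₀ r K B).deriv,
    (hasDerivAt_upOutCall_barrier (hφcont T) S₀ r K B).deriv⟩

/-- For all `0 < K < B` with `B > S₀` and all `T ≥ 0`,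
`∂C/∂K (K,B,T) = - D(T) ∫_{max(K,S₀)}^B ∫_K^y φ(x,y,T) dx dy` and
`∂C/∂B (K,B,T) = D(T) ∫_K^B (x-K) φ(x,B,T) dx`. -/
theorem stmt_16 (S₀ : ℝ) (hS₀ : 0 < S₀) (r : ℝ → ℝ) (hr : Continuous r)
    (φ : ℝ → ℝ → ℝ → ℝ)
    (hφcont : ∀ t : ℝ, Continuous fun p : ℝ × ℝ => φ p.1 p.2 t)
    (hφbd : ∀ s : Set (ℝ × ℝ × ℝ), IsCompact s → ∃ M : ℝ, ∀ p ∈ s, |φ p.1 p.2.1 p.2.2| ≤ M) :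
    ∀ K B T : ℝ, 0 < K → K < B → S₀ < B → 0 ≤ T →
      (deriv (fun K' => upOutCall S₀ r φ K' B T) K
          = -(disc r T) * ∫ y in (max K S₀)..B, ∫ x in K..y, φ x y T) ∧
      (deriv (fun B' => upOutCall S₀ r φ K B' T) B
          = disc r T * ∫ x in K..B, (x - K) * φ x B T) :=
  stmt_16_general S₀ r φ hφcont
end
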